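/- Let B, C be categories, φ : F → G a transformation of type |α| —σ→ n ←τ— |β| and ψ : G → H a transformation of type |β| —η→ m ←θ— |γ|, with the type of ψ∘φ given by a pushout ζ : n → l, ξ : m → l of τ and η. Let i ∈ {1, …, l}. If φ is dinatural in its y-th variable for every y ∈ ζ⁻¹{i}, ψ is dinatural in its z-th variable for every z ∈ ξ⁻¹{i}, and the i-th connected component of the composite graph Γ(ψ) ∘ Γ(φ) is acyclic, then ψ∘φ is dinatural in its i-th variable. -/

import Mathlib

open CategoryTheory Opposite

universe v u v' u'

/-- `SignObj B s` is `B` if the sign `s` is `true` (covariant) and `Bᵒᵖ` if `s` is `false`. -/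
def SignObj (B : Type u) : Bool → Type u
  | true => B
  | false => Bᵒᵖ

instance signObjCategory (B : Type u) [Category.{v} B] : ∀ s : Bool, Category.{v} (SignObj B s)
  | true => inferInstanceAs (Category.{v} B)
  | false => inferInstanceAs (Category.{v} Bᵒᵖ)

/-- Interpret an object of `B` as an object of `B` or `Bᵒᵖ`, according to a sign. -/
def toSign {B : Type u} : ∀ s : Bool, B → SignObj B s
  | true, X => X
  | false, X => op X

/-- Forget the sign of an object. -/
def unSign {B : Type u} : ∀ {s : Bool}, SignObj B s → B
  | true, X => X
  | false, X => unop X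

/-- A morphism of `B`, pointing in a direction prescribed by a sign. -/
def SignHom {B : Type u} [Category.{v} B] : Bool → B → B → Type v
  | true, X, Y => X ⟶ Y
  | false, X, Y => Y ⟶ X

def toSignHom {B : Type u} [Category.{v} B] : ∀ {s : Bool} {X Y : B},
    SignHom s X Y → (toSign s X ⟶ toSign s Y)
  | true, _, _, f => f
  | false, _, _, f => f.op

def signId {B : Type u} [Category.{v} B] : ∀ (s : Bool) (X : B), SignHom s X X
  | true, X => 𝟙 X
  | false, X => 𝟙 X

/-- The mixed-variance power category `B^α`. -/
abbrev PowCat (B : Type u) [Category.{v} B] {κ : Type} (α : κ → Bool) : Type u :=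
  ∀ j : κ, SignObj B (α j)

/-- The object of `B^α` whose `j`-th entry is `A (σ j)`. -/
abbrev tup {B : Type u} [Category.{v} B] {κ ι : Type} (α : κ → Bool) (σ : κ → ι)
    (A : ι → B) : PowCat B α :=
  fun j => toSign (α j) (A (σ j))

/-- A transformation `φ : F → G` of type `σ, τ`: a family of morphisms
`φ_𝐀 : F (𝐀 σ) ⟶ G (𝐀 τ)` indexed by tuples `𝐀` of objects of `B`. -/
def Transf {B : Type u} [Category.{v} B] {C : Type u'} [Category.{v'} C] {κa κb ι : Type}
    (α : κa → Bool) (β : κb → Bool) (F : PowCat B α ⥤ C) (G : PowCat B β ⥤ C)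
    (σ : κa → ι) (τ : κb → ι) : Type _ :=
  ∀ A : ι → B, F.obj (tup α σ A) ⟶ G.obj (tup β τ A)

/-- The tuple `A` with its `i`-th entry replaced by `X`. -/
abbrev upd {ι : Type} [DecidableEq ι] {B : Type u} (A : ι → B) (i : ι) (X : B) : ι → B :=
  fun k => if k = i then X else A k

/-- The mixed-variance tuple `𝐀[X,Y/i]σ`: entries over the `i`-th variable are
`e false` in contravariant positions, `e true` in covariant ones. -/
abbrev tupMV {B : Type u} [Category.{v} B] {κ ι : Type} [DecidableEq ι] (α : κ → Bool)
    (σ : κ → ι) (A : ι → B) (i : ι) (e : Bool → B) : PowCat B α :=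
  fun j => toSign (α j) (if σ j = i then e (α j) else A (σ j))

def mvHom {B : Type u} [Category.{v} B] {e₁ e₂ : Bool → B}
    (g : e₂ false ⟶ e₁ false) (h : e₁ true ⟶ e₂ true) :
    ∀ s : Bool, SignHom s (e₁ s) (e₂ s)
  | true => h
  | false => g

/-- The canonical morphism `tupMV α σ A i e₁ ⟶ tupMV α σ A i e₂` acting by `h` on
covariant entries over `i`, (the opposite of) `g` on contravariant entries over `i`, and
the identity elsewhere. -/
def tupMVHom {B : Type u} [Category.{v} B] {κ ι : Type} [DecidableEq ι] (α : κ → Bool)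
    (σ : κ → ι) (A : ι → B) (i : ι) (e₁ e₂ : Bool → B)
    (g : e₂ false ⟶ e₁ false) (h : e₁ true ⟶ e₂ true) :
    tupMV α σ A i e₁ ⟶ tupMV α σ A i e₂ :=
  fun j => toSignHom
    (show SignHom (α j) (if σ j = i then e₁ (α j) else A (σ j))
        (if σ j = i then e₂ (α j) else A (σ j)) from
      if hj : σ j = i then by simp only [if_pos hj]; exact mvHom g h (α j)
      else by simp only [if_neg hj]; exact signId (α j) (A (σ j)))

/-- Dinaturality of a transformation in its `i`-th variable. -/
def DinatAt {B : Type u} [Category.{v} B] {C : Type u'} [Category.{v'} C] {κa κb ι : Type}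
    [DecidableEq ι] {α : κa → Bool} {β : κb → Bool} {F : PowCat B α ⥤ C} {G : PowCat B β ⥤ C}
    {σ : κa → ι} {τ : κb → ι} (φ : Transf α β F G σ τ) (i : ι) : Prop :=
  ∀ (A : ι → B) {X Y : B} (f : X ⟶ Y),
    F.map (tupMVHom α σ A i (fun s => bif s then X else Y) (fun _ => X) f (𝟙 X)) ≫
        φ (upd A i X) ≫
        G.map (tupMVHom β τ A i (fun _ => X) (fun s => bif s then Y else X) (𝟙 X) f) =
      F.map (tupMVHom α σ A i (fun s => bif s then X else Y) (fun _ => Y) (𝟙 Y) f) ≫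
        φ (upd A i Y) ≫
        G.map (tupMVHom β τ A i (fun _ => Y) (fun s => bif s then Y else X) f (𝟙 Y))

/-- Vertical composition of transformations along a cocone `ζ, ξ` on their types. -/
def vcomp {B : Type u} [Category.{v} B] {C : Type u'} [Category.{v'} C]
    {κa κb κc ι₁ ι₂ ι : Type} {α : κa → Bool} {β : κb → Bool} {γ : κc → Bool}
    {F : PowCat B α ⥤ C} {G : PowCat B β ⥤ C} {H : PowCat B γ ⥤ C}
    {σ : κa → ι₁} {τ : κb → ι₁} {η : κb → ι₂} {θ : κc → ι₂}
    (φ : Transf α β F G σ τ) (ψ : Transf β γ G H η θ)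
    (ζ : ι₁ → ι) (ξ : ι₂ → ι) (hcomm : ∀ p, ζ (τ p) = ξ (η p)) :
    Transf α γ F H (fun p => ζ (σ p)) (fun p => ξ (θ p)) :=
  fun A =>
    φ (fun x => A (ζ x)) ≫
      eqToHom (congrArg G.obj (by
        funext j
        show toSign (β j) (A (ζ (τ j))) = toSign (β j) (A (ξ (η j)))
        rw [hcomm j])) ≫
      ψ (fun x => A (ξ x))

section CompositeGraph

/-- Vertices of the composite graph `Γ(ψ) ∘ Γ(φ)`: the places are the arguments of the
three functors involved (with the middle ones identified), the transitions are the
variables of the two transformations. -/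
abbrev CGV (wa wb wc n m : ℕ) : Type :=
  (Fin wa ⊕ Fin wb ⊕ Fin wc) ⊕ (Fin n ⊕ Fin m)

variable {wa wb wc n m l : ℕ}

/-- The arcs of the composite graph `Γ(ψ) ∘ Γ(φ)` of two consecutive transformations of
types `σ₁, τ₁` and `σ₂, τ₂` between functors of variances `α, β` and `β, γ`. -/
def compArc (α : Fin wa → Bool) (β : Fin wb → Bool) (γ : Fin wc → Bool)
    (σ₁ : Fin wa → Fin n) (τ₁ : Fin wb → Fin n)
    (σ₂ : Fin wb → Fin m) (τ₂ : Fin wc → Fin m) :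
    CGV wa wb wc n m → CGV wa wb wc n m → Prop
  | .inl (.inl p), .inr (.inl t) => σ₁ p = t ∧ α p = true
  | .inr (.inl t), .inl (.inl p) => σ₁ p = t ∧ α p = false
  | .inl (.inr (.inl p)), .inr (.inl t) => τ₁ p = t ∧ β p = false
  | .inr (.inl t), .inl (.inr (.inl p)) => τ₁ p = t ∧ β p = true
  | .inl (.inr (.inl p)), .inr (.inr t) => σ₂ p = t ∧ β p = true
  | .inr (.inr t), .inl (.inr (.inl p)) => σ₂ p = t ∧ β p = false
  | .inl (.inr (.inr p)), .inr (.inr t) => τ₂ p = t ∧ γ p = false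
  | .inr (.inr t), .inl (.inr (.inr p)) => τ₂ p = t ∧ γ p = true
  | _, _ => False

/-- The connected component (labelled by the pushout vertex `Fin l`) to which each
vertex of the composite graph belongs. -/
def compOfV (σ₁ : Fin wa → Fin n) (τ₁ : Fin wb → Fin n)
    (σ₂ : Fin wb → Fin m) (τ₂ : Fin wc → Fin m)
    (ζ : Fin n → Fin l) (ξ : Fin m → Fin l) :
    CGV wa wb wc n m → Fin l
  | .inl (.inl p) => ζ (σ₁ p)
  | .inl (.inr (.inl p)) => ζ (τ₁ p)
  | .inl (.inr (.inr p)) => ξ (τ₂ p)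
  | .inr (.inl t) => ζ t
  | .inr (.inr t) => ξ t

end CompositeGraph

/-!
Fix a tuple `𝐀` and `f : X ⟶ Y`. Give every variable of `φ` and of `ψ` lying over `i` a state,
`X` or `Y`, and evaluate `ψ ∘ φ` with these variables set accordingly, joining the pieces by the
maps that `f` induces on the arguments of `F₁`, `F₂`, `F₃`. On a place of the middle functor
such a map exists as long as the transition producing that place is not in state `Y` while the
one consuming it is still in state `X`. The two sides of the dinaturality condition for
`ψ ∘ φ` are this composite with all variables at `X`, and with all variables at `Y`.
Acyclicity of the `i`-th component lets us switch the variables from `X` to `Y` one at a time,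
always choosing one with no successor still at `X`; dinaturality of `φ` or `ψ` in the chosen
variable says exactly that the composite does not change.

States are booleans (`false` for `X`, `true` for `Y`), and a variable `y` in state `b` is
evaluated to `(E y).obj b` for a family `E` of functors `Bool ⥤ B`: the arrow `f` at `i`, and
constant elsewhere.
-/

section

variable {B : Type u} [Category.{v} B] {C : Type u'} [Category.{v'} C]

lemma Quiver.Hom.op_heq {X₁ Y₁ X₂ Y₂ : B} {u₁ : X₁ ⟶ Y₁} {u₂ : X₂ ⟶ Y₂} (hX : X₁ = X₂)
    (hY : Y₁ = Y₂) (hu : u₁ ≍ u₂) : u₁.op ≍ u₂.op := by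
  subst hX hY; cases hu; rfl

lemma CategoryTheory.Functor.map_heq {D : Type*} [Category D] (F : D ⥤ C) {X₁ Y₁ X₂ Y₂ : D}
    {u₁ : X₁ ⟶ Y₁} {u₂ : X₂ ⟶ Y₂} (hX : X₁ = X₂) (hY : Y₁ = Y₂) (hu : u₁ ≍ u₂) :
    F.map u₁ ≍ F.map u₂ := by
  subst hX hY; cases hu; rfl

lemma toSignHom_heq {s : Bool} {X₁ Y₁ X₂ Y₂ : B} {u₁ : SignHom s X₁ Y₁} {u₂ : SignHom s X₂ Y₂}
    (hX : X₁ = X₂) (hY : Y₁ = Y₂) (hu : u₁ ≍ u₂) : toSignHom u₁ ≍ toSignHom u₂ := by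
  subst hX hY; cases hu; rfl

section SignedStates

variable {P : Type} [Preorder P]

def SignedLE (s : Bool) (a b : P) : Prop := cond s (a ≤ b) (b ≤ a)

lemma signedLE_refl (s : Bool) (a : P) : SignedLE s a a := by
  cases s <;> exact le_rfl

lemma signedLE_trans {s : Bool} {a b c : P} (h : SignedLE s a b) (h' : SignedLE s b c) :
    SignedLE s a c := by
  cases s
  exacts [le_trans h' h, le_trans h h']

def signedMap (E : P ⥤ B) :
    ∀ (s : Bool) {a b : P}, SignedLE s a b → (toSign s (E.obj a) ⟶ toSign s (E.obj b))
  | true, _, _, h => E.map (homOfLE h)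
  | false, _, _, h => (E.map (homOfLE h)).op

lemma signedMap_comp (E : P ⥤ B) (s : Bool) {a b c : P} (h : SignedLE s a b)
    (h' : SignedLE s b c) :
    signedMap E s h ≫ signedMap E s h' = signedMap E s (signedLE_trans h h') := by
  cases s
  · exact congrArg Quiver.Hom.op (E.map_comp _ _).symm
  · exact (E.map_comp _ _).symm

lemma signedMap_self (E : P ⥤ B) (s : Bool) {a : P} (h : SignedLE s a a) :
    signedMap E s h = 𝟙 _ := by
  cases s
  · exact congrArg Quiver.Hom.op (E.map_id a)
  · exact E.map_id a

lemma signedMap_heq (E : P ⥤ B) (s : Bool) {a b a' b' : P} (h : SignedLE s a b)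
    (h' : SignedLE s a' b') (ha : a = a') (hb : b = b') :
    signedMap E s h ≍ signedMap E s h' := by
  subst ha hb; rfl

lemma signedMap_heq_id (E : P ⥤ B) (s : Bool) {a b : P} (h : SignedLE s a b) (hab : a = b) :
    signedMap E s h ≍ 𝟙 (toSign s (E.obj a)) := by
  subst hab; rw [signedMap_self]

variable {κ : Type} (α : κ → Bool) (E : κ → P ⥤ B)

abbrev stateObj (v : κ → P) : PowCat B α :=
  fun j => toSign (α j) ((E j).obj (v j))

def StateLE (v w : κ → P) : Prop :=
  ∀ j, SignedLE (α j) (v j) (w j)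

def stateHom (v w : κ → P) (h : StateLE α v w) : stateObj α E v ⟶ stateObj α E w :=
  fun j => signedMap (E j) (α j) (h j)

lemma stateHom_comp {u v w : κ → P} (h : StateLE α u v) (h' : StateLE α v w) :
    stateHom α E u v h ≫ stateHom α E v w h' =
      stateHom α E u w (fun j => signedLE_trans (h j) (h' j)) :=
  funext fun j => signedMap_comp (E j) (α j) (h j) (h' j)

lemma stateHom_self (v : κ → P) (h : StateLE α v v) : stateHom α E v v h = 𝟙 _ :=
  funext fun j => signedMap_self (E j) (α j) (h j)

variable {α} {E}

lemma map_stateHom_of_eq (F : PowCat B α ⥤ C) {u v : κ → P} (h : StateLE α u v) (huv : u = v) :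
    F.map (stateHom α E u v h) = eqToHom (by rw [huv]) := by
  subst huv; simp [stateHom_self]

lemma map_stateHom_comp_eqToHom {E' : κ → P ⥤ B} (hE : E = E') (F : PowCat B α ⥤ C)
    {u v : κ → P} (h : StateLE α u v) :
    F.map (stateHom α E u v h) ≫ eqToHom (congrArg (fun E => F.obj (stateObj α E v)) hE) =
      eqToHom (congrArg (fun E => F.obj (stateObj α E u)) hE) ≫ F.map (stateHom α E' u v h) := by
  subst hE; simp

end SignedStates

lemma signedLE_not_left (s b : Bool) : SignedLE s (!s) b := by
  cases s
  exacts [Bool.le_true b, Bool.false_le b]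

lemma signedLE_self_right (s b : Bool) : SignedLE s b s := by
  cases s
  exacts [Bool.false_le b, Bool.le_true b]

lemma signedLE_not_right {s a : Bool} (h₀ : SignedLE s a false) (h₁ : SignedLE s a true) :
    SignedLE s a (!s) := by
  cases s
  exacts [h₁, h₀]

lemma signedLE_self_left {s a : Bool} (h₀ : SignedLE s false a) (h₁ : SignedLE s true a) :
    SignedLE s s a := by
  cases s
  exacts [h₀, h₁]

section MixedTuples

variable {P : Type} [Preorder P] {κ ι : Type} [DecidableEq ι] (α : κ → Bool) (σ : κ → ι)

/-- The state of the mixed tuple `𝐀[X,Y/x]σ` of `tupMV`. -/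
abbrev mixState (c : ι → P) (x : ι) (ε : Bool → P) : κ → P :=
  fun j => if σ j = x then ε (α j) else c (σ j)

lemma tupMVHom_apply_heq_of_eq (A : ι → B) (x : ι) (e₁ e₂ : Bool → B)
    (g : e₂ false ⟶ e₁ false) (h : e₁ true ⟶ e₂ true) {j : κ} (hj : σ j = x) :
    tupMVHom α σ A x e₁ e₂ g h j ≍ toSignHom (mvHom g h (α j)) := by
  unfold tupMVHom
  dsimp only
  rw [dif_pos hj]
  exact toSignHom_heq (if_pos hj) (if_pos hj) (by rw [eq_mpr_eq_cast]; exact cast_heq _ _)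

lemma tupMVHom_apply_heq_of_ne (A : ι → B) (x : ι) (e₁ e₂ : Bool → B)
    (g : e₂ false ⟶ e₁ false) (h : e₁ true ⟶ e₂ true) {j : κ} (hj : σ j ≠ x) :
    tupMVHom α σ A x e₁ e₂ g h j ≍ 𝟙 (toSign (α j) (A (σ j))) := by
  unfold tupMVHom
  dsimp only
  rw [dif_neg hj]
  refine (toSignHom_heq (if_neg hj) (if_neg hj)
    (by rw [eq_mpr_eq_cast]; exact cast_heq _ _)).trans ?_
  cases α j <;> rfl

lemma toSignHom_mvHom_heq (E : P ⥤ B) {e₁ e₂ : Bool → B} {ε₁ ε₂ : Bool → P}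
    (he₁ : ∀ s, e₁ s = E.obj (ε₁ s)) (he₂ : ∀ s, e₂ s = E.obj (ε₂ s))
    {g : e₂ false ⟶ e₁ false} {h : e₁ true ⟶ e₂ true}
    (hle_false : ε₂ false ≤ ε₁ false) (hle_true : ε₁ true ≤ ε₂ true)
    (hg : g ≍ E.map (homOfLE hle_false)) (hh : h ≍ E.map (homOfLE hle_true))
    (s : Bool) (hs : SignedLE s (ε₁ s) (ε₂ s)) :
    toSignHom (mvHom g h s) ≍ signedMap E s hs := by
  cases s
  · exact Quiver.Hom.op_heq (he₂ false) (he₁ false) hg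
  · exact hh

variable {A : ι → B} {x : ι} {E : ι → P ⥤ B} {c : ι → P}

lemma tupMV_eq_stateObj (hA : ∀ y, y ≠ x → A y = (E y).obj (c y)) {e : Bool → B}
    {ε : Bool → P} (he : ∀ s, e s = (E x).obj (ε s)) :
    tupMV α σ A x e = stateObj α (fun j => E (σ j)) (mixState α σ c x ε) := by
  funext j
  refine congrArg (toSign (α j)) ?_
  by_cases hj : σ j = x
  · subst hj; simp [mixState, he]
  · simp [mixState, hj, hA _ hj]

lemma tupMVHom_heq_stateHom (hA : ∀ y, y ≠ x → A y = (E y).obj (c y)) {e₁ e₂ : Bool → B}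
    {ε₁ ε₂ : Bool → P} (he₁ : ∀ s, e₁ s = (E x).obj (ε₁ s))
    (he₂ : ∀ s, e₂ s = (E x).obj (ε₂ s)) {g : e₂ false ⟶ e₁ false} {h : e₁ true ⟶ e₂ true}
    (hle_false : ε₂ false ≤ ε₁ false) (hle_true : ε₁ true ≤ ε₂ true)
    (hg : g ≍ (E x).map (homOfLE hle_false)) (hh : h ≍ (E x).map (homOfLE hle_true))
    (hfit : StateLE α (mixState α σ c x ε₁) (mixState α σ c x ε₂)) :
    tupMVHom α σ A x e₁ e₂ g h ≍ stateHom α (fun j => E (σ j)) _ _ hfit := by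
  refine Function.hfunext rfl fun j j' hj => ?_
  cases hj
  by_cases hjx : σ j = x
  · refine (tupMVHom_apply_heq_of_eq α σ A x e₁ e₂ g h hjx).trans ?_
    subst hjx
    refine (toSignHom_mvHom_heq _ he₁ he₂ hle_false hle_true hg hh (α j)
      (by simpa [mixState] using hfit j)).trans (signedMap_heq _ _ _ _ ?_ ?_) <;> simp [mixState]
  · refine (tupMVHom_apply_heq_of_ne α σ A x e₁ e₂ g h hjx).trans ?_
    refine HEq.trans ?_ (signedMap_heq_id _ _ (hfit j) (by simp [mixState, hjx])).symm
    rw [hA _ hjx, show mixState α σ c x ε₁ j = c (σ j) from if_neg hjx]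

lemma map_tupMVHom_eq (F : PowCat B α ⥤ C) (hA : ∀ y, y ≠ x → A y = (E y).obj (c y))
    {e₁ e₂ : Bool → B} {ε₁ ε₂ : Bool → P} (he₁ : ∀ s, e₁ s = (E x).obj (ε₁ s))
    (he₂ : ∀ s, e₂ s = (E x).obj (ε₂ s)) {g : e₂ false ⟶ e₁ false} {h : e₁ true ⟶ e₂ true}
    (hle_false : ε₂ false ≤ ε₁ false) (hle_true : ε₁ true ≤ ε₂ true)
    (hg : g ≍ (E x).map (homOfLE hle_false)) (hh : h ≍ (E x).map (homOfLE hle_true))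
    (hfit : StateLE α (mixState α σ c x ε₁) (mixState α σ c x ε₂)) :
    F.map (tupMVHom α σ A x e₁ e₂ g h) =
      eqToHom (congrArg F.obj (tupMV_eq_stateObj α σ hA he₁)) ≫
        F.map (stateHom α (fun j => E (σ j)) _ _ hfit) ≫
        eqToHom (congrArg F.obj (tupMV_eq_stateObj α σ hA he₂)).symm :=
  (conj_eqToHom_iff_heq _ _ (congrArg F.obj (tupMV_eq_stateObj α σ hA he₁))
    (congrArg F.obj (tupMV_eq_stateObj α σ hA he₂))).2 <|
    F.map_heq (tupMV_eq_stateObj α σ hA he₁) (tupMV_eq_stateObj α σ hA he₂)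
      (tupMVHom_heq_stateHom α σ hA he₁ he₂ hle_false hle_true hg hh hfit)

lemma upd_eq_evalState (hA : ∀ y, y ≠ x → A y = (E y).obj (c y)) {X : B} {b : P}
    (hX : X = (E x).obj b) : upd A x X = fun y => (E y).obj (upd c x b y) := by
  funext y
  by_cases hy : y = x
  · subst hy; simp [upd, hX]
  · simp [upd, hy, hA y hy]

variable (ε : Bool → Bool) {v : κ → Bool}

lemma mixState_false_stateLE (hv : ∀ j, σ j ≠ x → v j = false)
    (hε : ∀ j, σ j = x → SignedLE (α j) (ε (α j)) (v j)) :
    StateLE α (mixState α σ (fun _ => false) x ε) v := fun j => by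
  by_cases hj : σ j = x
  · simpa [mixState, hj] using hε j hj
  · simpa [mixState, hj, hv j hj] using signedLE_refl (α j) false

lemma stateLE_mixState_false (hv : ∀ j, σ j ≠ x → v j = false)
    (hε : ∀ j, σ j = x → SignedLE (α j) (v j) (ε (α j))) :
    StateLE α v (mixState α σ (fun _ => false) x ε) := fun j => by
  by_cases hj : σ j = x
  · simpa [mixState, hj] using hε j hj
  · simpa [mixState, hj, hv j hj] using signedLE_refl (α j) false

end MixedTuples

section Dinaturality

variable {κa κb ι : Type} {α : κa → Bool} {β : κb → Bool}
  {F : PowCat B α ⥤ C} {G : PowCat B β ⥤ C} {σ : κa → ι} {τ : κb → ι}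

lemma Transf.congr_conj (φ : Transf α β F G σ τ) {A₁ A₂ : ι → B} (h : A₁ = A₂) :
    φ A₁ = eqToHom (by rw [h]) ≫ φ A₂ ≫ eqToHom (by rw [h]) := by
  subst h; simp

variable [DecidableEq ι]

lemma stateLE_mixState_not (c : ι → Bool) (x : ι) (b : Bool) :
    StateLE α (mixState α σ c x not) (fun j => upd c x b (σ j)) := fun j => by
  by_cases hj : σ j = x
  · simpa [mixState, upd, hj] using signedLE_not_left (α j) b
  · simpa [mixState, upd, hj] using signedLE_refl (α j) (c (σ j))

lemma stateLE_mixState_id (c : ι → Bool) (x : ι) (b : Bool) :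
    StateLE β (fun p => upd c x b (τ p)) (mixState β τ c x id) := fun p => by
  by_cases hp : τ p = x
  · simpa [mixState, upd, hp] using signedLE_self_right (β p) b
  · simpa [mixState, upd, hp] using signedLE_refl (β p) (c (τ p))

theorem DinatAt.stateHom_hexagon {φ : Transf α β F G σ τ} {x : ι} (hφ : DinatAt φ x)
    (E : ι → Bool ⥤ B) (c : ι → Bool) :
    F.map (stateHom α (fun j => E (σ j)) _ _ (stateLE_mixState_not c x false)) ≫
        φ (fun y => (E y).obj (upd c x false y)) ≫
        G.map (stateHom β (fun p => E (τ p)) _ _ (stateLE_mixState_id c x false)) =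
      F.map (stateHom α (fun j => E (σ j)) _ _ (stateLE_mixState_not c x true)) ≫
        φ (fun y => (E y).obj (upd c x true y)) ≫
        G.map (stateHom β (fun p => E (τ p)) _ _ (stateLE_mixState_id c x true)) := by
  set X := (E x).obj false
  set Y := (E x).obj true
  have hA : ∀ y, y ≠ x → (E y).obj (c y) = (E y).obj (c y) := fun _ _ => rfl
  have hd := hφ (fun y => (E y).obj (c y)) ((E x).map (homOfLE (Bool.false_le true)))
  have hid : ∀ b : Bool, 𝟙 ((E x).obj b) ≍ (E x).map (homOfLE (le_refl b)) :=
    fun b => (heq_of_eq ((E x).map_id b)).symm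
  have hXY : ∀ s, (bif s then X else Y) = (E x).obj (!s) := fun s => by cases s <;> rfl
  have hYX : ∀ s, (bif s then Y else X) = (E x).obj (id s) := fun s => by cases s <;> rfl
  rw [map_tupMVHom_eq α σ F hA (e₂ := fun _ => X) (ε₂ := fun _ => false) hXY
      (fun _ => rfl) (by decide) (by decide) HEq.rfl (hid false) (stateLE_mixState_not c x false),
    map_tupMVHom_eq α σ F hA (e₂ := fun _ => Y) (ε₂ := fun _ => true) hXY
      (fun _ => rfl) (by decide) (by decide) (hid true) HEq.rfl (stateLE_mixState_not c x true),
    map_tupMVHom_eq β τ G hA (e₁ := fun _ => X) (ε₁ := fun _ => false) (fun _ => rfl)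
      hYX (by decide) (by decide) (hid false) HEq.rfl (stateLE_mixState_id c x false),
    map_tupMVHom_eq β τ G hA (e₁ := fun _ => Y) (ε₁ := fun _ => true) (fun _ => rfl)
      hYX (by decide) (by decide) HEq.rfl (hid true) (stateLE_mixState_id c x true),
    φ.congr_conj (upd_eq_evalState hA rfl), φ.congr_conj (upd_eq_evalState hA rfl)] at hd
  simp only [Category.assoc, eqToHom_trans_assoc, eqToHom_refl, Category.id_comp,
    cancel_epi] at hd
  simp only [← Category.assoc, cancel_mono] at hd
  simpa only [Category.assoc] using hd

theorem DinatAt.flip {φ : Transf α β F G σ τ} {x : ι} (hφ : DinatAt φ x)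
    (E : ι → Bool ⥤ B) (c : ι → Bool) {w : κa → Bool} {w' : κb → Bool}
    (hw : ∀ b, StateLE α w (fun j => upd c x b (σ j)))
    (hw' : ∀ b, StateLE β (fun p => upd c x b (τ p)) w') :
    F.map (stateHom α (fun j => E (σ j)) _ _ (hw false)) ≫
        φ (fun y => (E y).obj (upd c x false y)) ≫
        G.map (stateHom β (fun p => E (τ p)) _ _ (hw' false)) =
      F.map (stateHom α (fun j => E (σ j)) _ _ (hw true)) ≫
        φ (fun y => (E y).obj (upd c x true y)) ≫
        G.map (stateHom β (fun p => E (τ p)) _ _ (hw' true)) := by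
  have hin : StateLE α w (mixState α σ c x not) := fun j => by
    by_cases hj : σ j = x
    · simpa [mixState, hj] using signedLE_not_right (by simpa [hj] using hw false j)
        (by simpa [hj] using hw true j)
    · simpa [mixState, hj] using hw false j
  have hout : StateLE β (mixState β τ c x id) w' := fun p => by
    by_cases hp : τ p = x
    · simpa [mixState, hp] using signedLE_self_left (by simpa [hp] using hw' false p)
        (by simpa [hp] using hw' true p)
    · simpa [mixState, hp] using hw' false p
  -- both sides factor through the mixed states, where `stateHom_hexagon` applies
  rw [← stateHom_comp _ _ hin (stateLE_mixState_not c x false),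
    ← stateHom_comp _ _ hin (stateLE_mixState_not c x true),
    ← stateHom_comp _ _ (stateLE_mixState_id c x false) hout,
    ← stateHom_comp _ _ (stateLE_mixState_id c x true) hout]
  simp only [Functor.map_comp, Category.assoc]
  rw [reassoc_of% hφ.stateHom_hexagon E c]

end Dinaturality

lemma stateLE_upd_false_comp {κb ι₁ ι₂ ι : Type} [DecidableEq ι] {β : κb → Bool}
    {τ₁ : κb → ι₁} {σ₂ : κb → ι₂} {ζ : ι₁ → ι} {ξ : ι₂ → ι} (hcomm : ∀ p, ζ (τ₁ p) = ξ (σ₂ p))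
    (i : ι) (b : Bool) :
    StateLE β (fun p => upd (fun _ => false) i b (ζ (τ₁ p)))
      (fun p => upd (fun _ => false) i b (ξ (σ₂ p))) := fun p => by
  dsimp only
  rw [hcomm p]
  exact signedLE_refl _ _

section Composite

variable {κa κb κc ι₁ ι₂ ι : Type} [DecidableEq ι]
  {α : κa → Bool} {β : κb → Bool} {γ : κc → Bool}
  {F₁ : PowCat B α ⥤ C} {F₂ : PowCat B β ⥤ C} {F₃ : PowCat B γ ⥤ C}
  {σ₁ : κa → ι₁} {τ₁ : κb → ι₁} {σ₂ : κb → ι₂} {τ₂ : κc → ι₂}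
  (φ : Transf α β F₁ F₂ σ₁ τ₁) (ψ : Transf β γ F₂ F₃ σ₂ τ₂)
  {ζ : ι₁ → ι} {ξ : ι₂ → ι} (hcomm : ∀ p, ζ (τ₁ p) = ξ (σ₂ p)) (i : ι) (E : ι → Bool ⥤ B)

def vcompState (c : ι₁ → Bool) (d : ι₂ → Bool) (hc : ∀ x, ζ x ≠ i → c x = false)
    (hd : ∀ z, ξ z ≠ i → d z = false)
    (hmid : StateLE β (fun p => c (τ₁ p)) (fun p => d (σ₂ p))) :
    F₁.obj (stateObj α (fun j => E (ζ (σ₁ j)))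
        (mixState α (fun j => ζ (σ₁ j)) (fun _ => false) i not)) ⟶
      F₃.obj (stateObj γ (fun p => E (ξ (τ₂ p)))
        (mixState γ (fun p => ξ (τ₂ p)) (fun _ => false) i id)) :=
  F₁.map (stateHom α _ _ _ (mixState_false_stateLE α _ not (fun j => hc (σ₁ j))
      (fun j _ => signedLE_not_left (α j) _))) ≫
    φ (fun x => (E (ζ x)).obj (c x)) ≫
    F₂.map (stateHom β (fun p => E (ζ (τ₁ p))) _ _ hmid) ≫
    eqToHom (congrArg (fun E' => F₂.obj (stateObj β E' (fun p => d (σ₂ p))))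
      (funext fun p => congrArg E (hcomm p))) ≫
    ψ (fun z => (E (ξ z)).obj (d z)) ≫
    F₃.map (stateHom γ _ _ _ (stateLE_mixState_false γ _ id (fun p => hd (τ₂ p))
      (fun p _ => signedLE_self_right (γ p) _)))

lemma vcompState_congr {c c' : ι₁ → Bool} {d d' : ι₂ → Bool} (hc' : c = c') (hd' : d = d')
    (hc : ∀ x, ζ x ≠ i → c x = false) (hd : ∀ z, ξ z ≠ i → d z = false)
    (hmid : StateLE β (fun p => c (τ₁ p)) (fun p => d (σ₂ p))) :
    vcompState φ ψ hcomm i E c d hc hd hmid =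
      vcompState φ ψ hcomm i E c' d' (hc' ▸ hc) (hd' ▸ hd) (hc' ▸ hd' ▸ hmid) := by
  subst hc' hd'; rfl

lemma vcompState_flip_left [DecidableEq ι₁] {x : ι₁} (hφx : DinatAt φ x) {c : ι₁ → Bool}
    {d : ι₂ → Bool} (hc₀ : ∀ y, ζ y ≠ i → upd c x false y = false)
    (hc₁ : ∀ y, ζ y ≠ i → upd c x true y = false) (hd : ∀ z, ξ z ≠ i → d z = false)
    (h₀ : StateLE β (fun p => upd c x false (τ₁ p)) (fun p => d (σ₂ p)))
    (h₁ : StateLE β (fun p => upd c x true (τ₁ p)) (fun p => d (σ₂ p))) :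
    vcompState φ ψ hcomm i E (upd c x false) d hc₀ hd h₀ =
      vcompState φ ψ hcomm i E (upd c x true) d hc₁ hd h₁ := by
  have hw : ∀ b, StateLE α (mixState α (fun j => ζ (σ₁ j)) (fun _ => false) i not)
      (fun j => upd c x b (σ₁ j)) := fun b => by
    cases b
    exacts [mixState_false_stateLE α _ not (fun j => hc₀ (σ₁ j))
        (fun j _ => signedLE_not_left (α j) _),
      mixState_false_stateLE α _ not (fun j => hc₁ (σ₁ j))
        (fun j _ => signedLE_not_left (α j) _)]
  have hw' : ∀ b, StateLE β (fun p => upd c x b (τ₁ p)) (fun p => d (σ₂ p)) := fun b => by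
    cases b
    exacts [h₀, h₁]
  unfold vcompState
  rw [reassoc_of% hφx.flip (fun y => E (ζ y)) c hw hw']

lemma vcompState_flip_right [DecidableEq ι₂] {z : ι₂} (hψz : DinatAt ψ z) {c : ι₁ → Bool}
    {d : ι₂ → Bool} (hc : ∀ x, ζ x ≠ i → c x = false)
    (hd₀ : ∀ y, ξ y ≠ i → upd d z false y = false)
    (hd₁ : ∀ y, ξ y ≠ i → upd d z true y = false)
    (h₀ : StateLE β (fun p => c (τ₁ p)) (fun p => upd d z false (σ₂ p)))
    (h₁ : StateLE β (fun p => c (τ₁ p)) (fun p => upd d z true (σ₂ p))) :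
    vcompState φ ψ hcomm i E c (upd d z false) hc hd₀ h₀ =
      vcompState φ ψ hcomm i E c (upd d z true) hc hd₁ h₁ := by
  have hw : ∀ b, StateLE β (fun p => c (τ₁ p)) (fun p => upd d z b (σ₂ p)) := fun b => by
    cases b
    exacts [h₀, h₁]
  have hw' : ∀ b, StateLE γ (fun p => upd d z b (τ₂ p))
      (mixState γ (fun p => ξ (τ₂ p)) (fun _ => false) i id) := fun b => by
    cases b
    exacts [stateLE_mixState_false γ _ id (fun p => hd₀ (τ₂ p))
        (fun p _ => signedLE_self_right (γ p) _),
      stateLE_mixState_false γ _ id (fun p => hd₁ (τ₂ p))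
        (fun p _ => signedLE_self_right (γ p) _)]
  have hE : (fun p => E (ζ (τ₁ p))) = fun p => E (ξ (σ₂ p)) :=
    funext fun p => congrArg E (hcomm p)
  unfold vcompState
  rw [reassoc_of% map_stateHom_comp_eqToHom hE F₂ h₀,
    reassoc_of% map_stateHom_comp_eqToHom hE F₂ h₁, hψz.flip (fun y => E (ξ y)) d hw hw']

theorem vcomp_heq_vcompState {A : ι → B} (hA : ∀ y, y ≠ i → A y = (E y).obj false)
    {X Y Z : B} (hX : X = (E i).obj false) (hY : Y = (E i).obj true) (b : Bool)
    (hZ : Z = (E i).obj b) {g₁ : Z ⟶ Y} {h₁ : X ⟶ Z} {g₃ : X ⟶ Z} {h₃ : Z ⟶ Y}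
    (hg₁ : g₁ ≍ (E i).map (homOfLE (Bool.le_true b)))
    (hh₁ : h₁ ≍ (E i).map (homOfLE (Bool.false_le b)))
    (hg₃ : g₃ ≍ (E i).map (homOfLE (Bool.false_le b)))
    (hh₃ : h₃ ≍ (E i).map (homOfLE (Bool.le_true b))) :
    F₁.map (tupMVHom α (fun p => ζ (σ₁ p)) A i (fun s => bif s then X else Y) (fun _ => Z)
        g₁ h₁) ≫
      vcomp φ ψ ζ ξ hcomm (upd A i Z) ≫
      F₃.map (tupMVHom γ (fun p => ξ (τ₂ p)) A i (fun _ => Z) (fun s => bif s then Y else X)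
        g₃ h₃) ≍
    vcompState φ ψ hcomm i E (fun x => upd (fun _ => false) i b (ζ x))
      (fun z => upd (fun _ => false) i b (ξ z)) (fun _ h => if_neg h) (fun _ h => if_neg h)
      (stateLE_upd_false_comp hcomm i b) := by
  have hA' : ∀ y, y ≠ i → A y = (E y).obj ((fun _ => false) y) := hA
  have hXY : ∀ s, (bif s then X else Y) = (E i).obj (!s) := fun s => by cases s <;> assumption
  have hYX : ∀ s, (bif s then Y else X) = (E i).obj (id s) := fun s => by cases s <;> assumption
  have hupd := upd_eq_evalState hA' hZ
  rw [map_tupMVHom_eq α _ F₁ hA' (ε₂ := fun _ => b) hXY (fun _ => hZ) _ _ hg₁ hh₁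
      (mixState_false_stateLE α _ not (fun _ h => if_neg h)
        (fun j _ => signedLE_not_left (α j) _)),
    map_tupMVHom_eq γ _ F₃ hA' (ε₁ := fun _ => b) (fun _ => hZ) hYX _ _ hg₃ hh₃
      (stateLE_mixState_false γ _ id (fun _ h => if_neg h)
        (fun p _ => signedLE_self_right (γ p) _))]
  unfold vcomp vcompState
  rw [φ.congr_conj (funext fun x => congrFun hupd (ζ x)),
    ψ.congr_conj (funext fun z => congrFun hupd (ξ z)),
    map_stateHom_of_eq F₂ _ (funext fun p => congrArg (upd (fun _ => false) i b) (hcomm p))]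
  simp only [Category.assoc, eqToHom_trans_assoc, eqToHom_refl, Category.id_comp,
    eqToHom_comp_heq_iff]
  simp only [← Category.assoc, comp_eqToHom_heq_iff]
  rfl

end Composite

lemma Finset.exists_forall_not_rel_of_acyclic {α : Type*} {r : α → α → Prop} {s : Finset α}
    (hs : s.Nonempty) (hacyc : ∀ a ∈ s, ¬ Relation.TransGen r a a) :
    ∃ a ∈ s, ∀ b ∈ s, ¬ r a b := by
  let R : s → s → Prop := fun b a => Relation.TransGen r a b
  have : IsTrans s R := ⟨fun _ _ _ hab hbc => hbc.trans hab⟩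
  have : Std.Irrefl R := ⟨fun a => hacyc a a.2⟩
  obtain ⟨a, -, ha⟩ := (Finite.wellFounded_of_trans_of_irrefl R).has_min Set.univ
    ⟨⟨_, hs.choose_spec⟩, trivial⟩
  exact ⟨a, a.2, fun b hb hab => ha ⟨b, hb⟩ trivial (.single hab)⟩

lemma upd_eq_self {ι : Type} [DecidableEq ι] {X : Type*} {c : ι → X} {x : ι} {b : X}
    (h : c x = b) : upd c x b = c := by
  funext y
  by_cases hy : y = x
  · subst hy; simp [upd, h]
  · simp [upd, hy]

section Flipping

variable {κb ι₁ ι₂ : Type} {β : κb → Bool} {τ₁ : κb → ι₁} {σ₂ : κb → ι₂}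

/-- The arcs between transitions of `Γ(ψ) ∘ Γ(φ)` through a place of the middle functor. -/
inductive MiddleArc (β : κb → Bool) (τ₁ : κb → ι₁) (σ₂ : κb → ι₂) : ι₁ ⊕ ι₂ → ι₁ ⊕ ι₂ → Prop
  | covariant (p : κb) : β p = true → MiddleArc β τ₁ σ₂ (.inl (τ₁ p)) (.inr (σ₂ p))
  | contravariant (p : κb) : β p = false → MiddleArc β τ₁ σ₂ (.inr (σ₂ p)) (.inl (τ₁ p))

lemma stateLE_upd_left [DecidableEq ι₁] {c : ι₁ → Bool} {d : ι₂ → Bool} {x : ι₁}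
    (hmid : StateLE β (fun p => c (τ₁ p)) (fun p => d (σ₂ p)))
    (hx : ∀ p, τ₁ p = x → β p = true → d (σ₂ p) = true) :
    StateLE β (fun p => upd c x true (τ₁ p)) (fun p => d (σ₂ p)) := fun p => by
  by_cases hp : τ₁ p = x
  · simp only [upd, hp, if_true]
    cases hβ : β p
    · exact Bool.le_true _
    · simp [SignedLE, hx p hp hβ]
  · simpa [upd, hp] using hmid p

lemma stateLE_upd_right [DecidableEq ι₂] {c : ι₁ → Bool} {d : ι₂ → Bool} {z : ι₂}
    (hmid : StateLE β (fun p => c (τ₁ p)) (fun p => d (σ₂ p)))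
    (hz : ∀ p, σ₂ p = z → β p = false → c (τ₁ p) = true) :
    StateLE β (fun p => c (τ₁ p)) (fun p => upd d z true (σ₂ p)) := fun p => by
  by_cases hp : σ₂ p = z
  · simp only [upd, hp, if_true]
    cases hβ : β p
    · simp [SignedLE, hz p hp hβ]
    · exact Bool.le_true _
  · simpa [upd, hp] using hmid p

variable {ι : Type} [DecidableEq ι] [Fintype ι₁] [Fintype ι₂]

def unflipped (ζ : ι₁ → ι) (ξ : ι₂ → ι) (i : ι) (c : ι₁ → Bool) (d : ι₂ → Bool) :
    Finset (ι₁ ⊕ ι₂) :=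
  Finset.univ.filter fun t => Sum.elim ζ ξ t = i ∧ Sum.elim c d t = false

variable {ζ : ι₁ → ι} {ξ : ι₂ → ι} {i : ι}

variable {κa κc : Type} {α : κa → Bool} {γ : κc → Bool}
  {F₁ : PowCat B α ⥤ C} {F₂ : PowCat B β ⥤ C} {F₃ : PowCat B γ ⥤ C}
  {σ₁ : κa → ι₁} {τ₂ : κc → ι₂}
  (φ : Transf α β F₁ F₂ σ₁ τ₁) (ψ : Transf β γ F₂ F₃ σ₂ τ₂)
  (hcomm : ∀ p, ζ (τ₁ p) = ξ (σ₂ p)) (E : ι → Bool ⥤ B)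

lemma vcompState_eq_of_unflipped_eq_empty {c : ι₁ → Bool} {d : ι₂ → Bool}
    (hc : ∀ x, ζ x ≠ i → c x = false) (hd : ∀ z, ξ z ≠ i → d z = false)
    (hmid : StateLE β (fun p => c (τ₁ p)) (fun p => d (σ₂ p))) (hnil : unflipped ζ ξ i c d = ∅) :
    vcompState φ ψ hcomm i E c d hc hd hmid =
      vcompState φ ψ hcomm i E (fun x => upd (fun _ => false) i true (ζ x))
        (fun z => upd (fun _ => false) i true (ξ z)) (fun _ h => if_neg h) (fun _ h => if_neg h)
        (stateLE_upd_false_comp hcomm i true) := by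
  have hflipped : ∀ t, Sum.elim ζ ξ t = i → Sum.elim c d t = true := fun t ht => by
    simpa [unflipped, ht] using Finset.eq_empty_iff_forall_notMem.1 hnil t
  refine vcompState_congr φ ψ hcomm i E (funext fun x => ?_) (funext fun z => ?_) hc hd hmid
  · by_cases hx : ζ x = i
    · simpa [upd, hx] using hflipped (.inl x) hx
    · simpa [upd, hx] using hc x hx
  · by_cases hz : ξ z = i
    · simpa [upd, hz] using hflipped (.inr z) hz
    · simpa [upd, hz] using hd z hz

variable [DecidableEq ι₁] [DecidableEq ι₂]

lemma unflipped_upd_left (c : ι₁ → Bool) (d : ι₂ → Bool) (x : ι₁) :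
    unflipped ζ ξ i (upd c x true) d = (unflipped ζ ξ i c d).erase (.inl x) := by
  ext (y | z)
  · by_cases hy : y = x <;> simp [unflipped, upd, hy]
  · simp [unflipped]

lemma unflipped_upd_right (c : ι₁ → Bool) (d : ι₂ → Bool) (z : ι₂) :
    unflipped ζ ξ i c (upd d z true) = (unflipped ζ ξ i c d).erase (.inr z) := by
  ext (x | y)
  · simp [unflipped]
  · by_cases hy : y = z <;> simp [unflipped, upd, hy]

theorem vcompState_eq_of_acyclic (hφ : ∀ x, ζ x = i → DinatAt φ x)
    (hψ : ∀ z, ξ z = i → DinatAt ψ z)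
    (hacyc : ∀ t, Sum.elim ζ ξ t = i → ¬ Relation.TransGen (MiddleArc β τ₁ σ₂) t t)
    (c : ι₁ → Bool) (d : ι₂ → Bool) (hc : ∀ x, ζ x ≠ i → c x = false)
    (hd : ∀ z, ξ z ≠ i → d z = false)
    (hmid : StateLE β (fun p => c (τ₁ p)) (fun p => d (σ₂ p))) :
    vcompState φ ψ hcomm i E c d hc hd hmid =
      vcompState φ ψ hcomm i E (fun x => upd (fun _ => false) i true (ζ x))
        (fun z => upd (fun _ => false) i true (ξ z)) (fun _ h => if_neg h) (fun _ h => if_neg h)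
        (stateLE_upd_false_comp hcomm i true) := by
  induction hk : (unflipped ζ ξ i c d).card using Nat.strong_induction_on generalizing c d with
  | _ k ih =>
  obtain hnil | hne := (unflipped ζ ξ i c d).eq_empty_or_nonempty
  · exact vcompState_eq_of_unflipped_eq_empty φ ψ hcomm E hc hd hmid hnil
  -- flip a transition of the component none of whose successors is still unflipped
  obtain ⟨t, ht, hsink⟩ := Finset.exists_forall_not_rel_of_acyclic hne
    fun t ht => hacyc t (Finset.mem_filter.1 ht).2.1
  rcases t with x | z
  · obtain ⟨hx, hcx⟩ : ζ x = i ∧ c x = false := by simpa [unflipped] using ht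
    have hc₁ : ∀ y, ζ y ≠ i → upd c x true y = false := fun y hy => by
      simpa [upd, show y ≠ x by rintro rfl; exact hy hx] using hc y hy
    have h₁ := stateLE_upd_left (x := x) hmid fun p hp hβ => by
      by_contra hdp
      refine hsink (.inr (σ₂ p)) ?_ (hp ▸ .covariant p hβ)
      simpa [unflipped, ← hcomm p, hp, hx] using hdp
    rw [vcompState_congr φ ψ hcomm i E (upd_eq_self hcx).symm rfl,
      vcompState_flip_left φ ψ hcomm i E (hφ x hx) _ hc₁ hd _ h₁]
    refine ih _ ?_ _ _ hc₁ hd h₁ rfl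
    rw [← hk, unflipped_upd_left]
    exact Finset.card_erase_lt_of_mem ht
  · obtain ⟨hz, hdz⟩ : ξ z = i ∧ d z = false := by simpa [unflipped] using ht
    have hd₁ : ∀ y, ξ y ≠ i → upd d z true y = false := fun y hy => by
      simpa [upd, show y ≠ z by rintro rfl; exact hy hz] using hd y hy
    have h₁ := stateLE_upd_right (z := z) hmid fun p hp hβ => by
      by_contra hcp
      refine hsink (.inl (τ₁ p)) ?_ (hp ▸ .contravariant p hβ)
      simpa [unflipped, hcomm p, hp, hz] using hcp
    rw [vcompState_congr φ ψ hcomm i E rfl (upd_eq_self hdz).symm,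
      vcompState_flip_right φ ψ hcomm i E (hψ z hz) hc _ hd₁ _ h₁]
    refine ih _ ?_ _ _ hc hd₁ h₁ rfl
    rw [← hk, unflipped_upd_right]
    exact Finset.card_erase_lt_of_mem ht

end Flipping

section Acyclicity

variable {wa wb wc n m l : ℕ} {α : Fin wa → Bool} {β : Fin wb → Bool} {γ : Fin wc → Bool}
  {σ₁ : Fin wa → Fin n} {τ₁ : Fin wb → Fin n} {σ₂ : Fin wb → Fin m} {τ₂ : Fin wc → Fin m}

lemma MiddleArc.transGen_compArc {t t' : Fin n ⊕ Fin m} (h : MiddleArc β τ₁ σ₂ t t') :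
    Relation.TransGen (compArc α β γ σ₁ τ₁ σ₂ τ₂) (.inr t) (.inr t') := by
  cases h with
  | covariant p hp | contravariant p hp =>
    exact .head (b := (.inl (.inr (.inl p)) : CGV wa wb wc n m)) ⟨rfl, hp⟩ (.single ⟨rfl, hp⟩)

lemma not_transGen_middleArc {ζ : Fin n → Fin l} {ξ : Fin m → Fin l} {i : Fin l}
    (hacyclic : ∀ v : CGV wa wb wc n m, compOfV σ₁ τ₁ σ₂ τ₂ ζ ξ v = i →
      ¬ Relation.TransGen (compArc α β γ σ₁ τ₁ σ₂ τ₂) v v)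
    (t : Fin n ⊕ Fin m) (ht : Sum.elim ζ ξ t = i) :
    ¬ Relation.TransGen (MiddleArc β τ₁ σ₂) t t := fun h =>
  hacyclic (.inr t) (by cases t <;> exact ht) (h.lift' _ fun _ _ => MiddleArc.transGen_compArc)

end Acyclicity

def arrowFunctor {X Y : B} (f : X ⟶ Y) : Bool ⥤ B where
  obj b := bif b then Y else X
  map {a b} h := match a, b, leOfHom h with
    | false, false, _ => 𝟙 X
    | false, true, _ => f
    | true, false, h => absurd h (by decide)
    | true, true, _ => 𝟙 Y
  map_id := by rintro (_ | _) <;> rfl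
  map_comp := by
    rintro (_ | _) (_ | _) (_ | _) g h
    all_goals first
      | exact absurd (leOfHom g) (by decide)
      | exact absurd (leOfHom h) (by decide)
      | simp

end

theorem vcomp_dinatural_of_acyclic_component_general
    {B : Type u} [Category.{v} B] {C : Type u'} [Category.{v'} C]
    {wa wb wc n m l : ℕ}
    {α : Fin wa → Bool} {β : Fin wb → Bool} {γ : Fin wc → Bool}
    {F₁ : PowCat B α ⥤ C} {F₂ : PowCat B β ⥤ C} {F₃ : PowCat B γ ⥤ C}
    {σ₁ : Fin wa → Fin n} {τ₁ : Fin wb → Fin n} {σ₂ : Fin wb → Fin m} {τ₂ : Fin wc → Fin m}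
    (φ : Transf α β F₁ F₂ σ₁ τ₁) (ψ : Transf β γ F₂ F₃ σ₂ τ₂)
    (ζ : Fin n → Fin l) (ξ : Fin m → Fin l)
    (hcomm : ∀ p, ζ (τ₁ p) = ξ (σ₂ p))
    (i : Fin l)
    (hφ : ∀ y, ζ y = i → DinatAt φ y) (hψ : ∀ z, ξ z = i → DinatAt ψ z)
    (hacyclic : ∀ v : CGV wa wb wc n m, compOfV σ₁ τ₁ σ₂ τ₂ ζ ξ v = i →
      ¬ Relation.TransGen (compArc α β γ σ₁ τ₁ σ₂ τ₂) v v) :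
    DinatAt (vcomp φ ψ ζ ξ hcomm) i := by
  intro A X Y f
  let E := Function.update (fun y => (Functor.const Bool).obj (A y)) i (arrowFunctor f)
  have hEi : E i = arrowFunctor f := Function.update_self ..
  have hA : ∀ y, y ≠ i → A y = (E y).obj false := fun y hy => by
    simp [E, Function.update_of_ne hy]
  have hobj : ∀ b : Bool, (E i).obj b = bif b then Y else X := fun b => by rw [hEi]; rfl
  have hmap : ∀ {a b : Bool} (h : a ≤ b),
      (arrowFunctor f).map (homOfLE h) ≍ (E i).map (homOfLE h) := fun h => by rw [hEi]
  have hflip := vcompState_eq_of_acyclic φ ψ hcomm E hφ hψ (not_transGen_middleArc hacyclic)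
    _ _ (fun _ h => if_neg h) (fun _ h => if_neg h) (stateLE_upd_false_comp hcomm i false)
  have hX := vcomp_heq_vcompState φ ψ hcomm i E hA (hobj false).symm (hobj true).symm false
    (hobj false).symm (g₁ := f) (h₁ := 𝟙 X) (g₃ := 𝟙 X) (h₃ := f)
    (hmap (Bool.le_true false)) (hmap (Bool.false_le false)) (hmap (Bool.false_le false))
    (hmap (Bool.le_true false))
  have hY := vcomp_heq_vcompState φ ψ hcomm i E hA (hobj false).symm (hobj true).symm true
    (hobj true).symm (g₁ := 𝟙 Y) (h₁ := f) (g₃ := f) (h₃ := 𝟙 Y)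
    (hmap (Bool.le_true true)) (hmap (Bool.false_le true)) (hmap (Bool.false_le true))
    (hmap (Bool.le_true true))
  exact eq_of_heq ((hX.trans (heq_of_eq hflip)).trans hY.symm)

/-- Let `φ : F₁ → F₂` and `ψ : F₂ → F₃` be transformations, with the
type of `ψ ∘ φ` given by a pushout `ζ, ξ` of `τ₁` and `σ₂`, and let `i` be a variable of
`ψ ∘ φ`.  If `φ` is dinatural in every variable in `ζ⁻¹{i}`, `ψ` is dinatural in every
variable in `ξ⁻¹{i}`, and the `i`-th connected component of the composite graph
`Γ(ψ) ∘ Γ(φ)` is acyclic, then `ψ ∘ φ` is dinatural in its `i`-th variable. -/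
theorem vcomp_dinatural_of_acyclic_component
    {B : Type u} [Category.{v} B] {C : Type u'} [Category.{v'} C]
    {wa wb wc n m l : ℕ} (hn : 0 < n) (hm : 0 < m) (hl : 0 < l)
    {α : Fin wa → Bool} {β : Fin wb → Bool} {γ : Fin wc → Bool}
    {F₁ : PowCat B α ⥤ C} {F₂ : PowCat B β ⥤ C} {F₃ : PowCat B γ ⥤ C}
    {σ₁ : Fin wa → Fin n} {τ₁ : Fin wb → Fin n} {σ₂ : Fin wb → Fin m} {τ₂ : Fin wc → Fin m}
    (φ : Transf α β F₁ F₂ σ₁ τ₁) (ψ : Transf β γ F₂ F₃ σ₂ τ₂)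
    (ζ : Fin n → Fin l) (ξ : Fin m → Fin l)
    (hcomm : ∀ p, ζ (τ₁ p) = ξ (σ₂ p))
    (hpush : ∀ (Z : Type) (u : Fin n → Z) (v : Fin m → Z), (∀ p, u (τ₁ p) = v (σ₂ p)) →
      ∃! w : Fin l → Z, (∀ x, w (ζ x) = u x) ∧ ∀ y, w (ξ y) = v y)
    (i : Fin l)
    (hφ : ∀ y, ζ y = i → DinatAt φ y) (hψ : ∀ z, ξ z = i → DinatAt ψ z)
    (hacyclic : ∀ v : CGV wa wb wc n m, compOfV σ₁ τ₁ σ₂ τ₂ ζ ξ v = i →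
      ¬ Relation.TransGen (compArc α β γ σ₁ τ₁ σ₂ τ₂) v v) :
    DinatAt (vcomp φ ψ ζ ξ hcomm) i :=
  vcomp_dinatural_of_acyclic_component_general φ ψ ζ ξ hcomm i hφ hψ hacyclic
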